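/- Let g ∈ G⁵ with ↑(g) ≥ 2. Then the words g, g^c g, g g^c, g g^L g and g g^R g of G⁺ are all ρ-equivalent: g ≈ g^c g ≈ g g^c ≈ g g^L g ≈ g g^R g. -/
import Mathlib


namespace WGO

/-- Letters: the anchors `1`, `x`, `x'` (written `one`, `x`, `xp`) and 5-tuples. -/
inductive Letter : Type
  | one : Letter
  | x : Letter
  | xp : Letter
  | tup : Letter → Letter → Letter → Letter → Letter → Letter
deriving DecidableEq

/-- The involution on anchors: `x' = xp`, `xp' = x`, `1' = 1` (junk on tuples). -/
def ainv : Letter → Letter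
  | .x => .xp
  | .xp => .x
  | a => a

/-- Left entry `g^l`. -/
def Letter.lft : Letter → Letter
  | .tup l _ _ _ _ => l
  | _ => .one

/-- Left anchor `g^{la}`. -/
def Letter.lfta : Letter → Letter
  | .tup _ la _ _ _ => la
  | _ => .one

/-- Middle entry `g^c`. -/
def Letter.ctr : Letter → Letter
  | .tup _ _ c _ _ => c
  | _ => .one

/-- Right anchor `g^{ra}`. -/
def Letter.rgta : Letter → Letter
  | .tup _ _ _ ra _ => ra
  | _ => .one

/-- Right entry `g^r`. -/
def Letter.rgt : Letter → Letter
  | .tup _ _ _ _ r => r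
  | _ => .one

/-- The 5-tuple `g_{xx'} = (1,1,x,x',1)`. -/
def gxx : Letter := .tup .one .one .x .xp .one

/-- The set of anchors `A = {1, x, x'}`. -/
def AnchorS : Set Letter := {Letter.one, Letter.x, Letter.xp}

/-- The sets `G_{i,e}`. -/
def Ge : ℕ → Set Letter
  | 0 => ∅
  | 1 => {gxx}
  | (i+2) => {h | ∃ g ∈ Ge (i+1),
      h = Letter.tup g (ainv g.lfta) g.lft (ainv g.rgta) g ∨
      h = Letter.tup g (ainv g.rgta) g.lft (ainv g.lfta) g}

/-- The sets `G_{i,d}`. -/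
def Gd : ℕ → Set Letter
  | 0 => ∅
  | 1 => ∅
  | 2 => ∅
  | (i+3) => {h | ∃ l la c ra r, h = Letter.tup l la c ra r ∧
      l ∈ Ge (i+2) ∪ Gd (i+2) ∧ r ∈ Ge (i+2) ∪ Gd (i+2) ∧
      c ∈ Ge (i+1) ∪ Gd (i+1) ∧ la ∈ AnchorS ∧ ra ∈ AnchorS ∧
      l ≠ r ∧
      ((c = l.lft ∧ la = ainv l.lfta) ∨ (c = l.rgt ∧ la = ainv l.rgta)) ∧
      ((c = r.lft ∧ ra = ainv r.lfta) ∨ (c = r.rgt ∧ ra = ainv r.rgta))}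

/-- `G_i = G_{i,e} ∪ G_{i,d}`. -/
def GI (i : ℕ) : Set Letter := Ge i ∪ Gd i

/-- `G⁵ = ⋃_{i ≥ 1} G_i`. -/
def G5 : Set Letter := {g | ∃ i, g ∈ GI i}

/-- `G = G⁵ ∪ A`. -/
def Gset : Set Letter := G5 ∪ AnchorS

/-- `G' = G⁵ ∪ {1}`. -/
def Gp : Set Letter := G5 ∪ {Letter.one}

/-- The height `↑(g)`: `0` on `1` (and anchors), and `i` on members of `G_i`. -/
def ht : Letter → ℕ
  | .tup l _ _ _ _ => ht l + 1
  | _ => 0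

/-- The free semigroup `G⁺` (on the ambient type of letters). -/
abbrev W := FreeSemigroup Letter

/-- One-letter word. -/
def wd : Letter → W := FreeSemigroup.of

/-- The word `g^L = (g^{la})' g^l g^{la}`. -/
def gLw (g : Letter) : W := wd (ainv g.lfta) * wd g.lft * wd g.lfta

/-- The word `g^R = (g^{ra})' g^r g^{ra}`. -/
def gRw (g : Letter) : W := wd (ainv g.rgta) * wd g.rgt * wd g.rgta

/-- The generating relation `ρ_e ∪ ρ_s`. -/
def rhoBase : W → W → Prop := fun u v =>
  (u = wd .x * wd .xp * wd .x ∧ v = wd .x) ∨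
  (u = wd .xp * wd .x * wd .xp ∧ v = wd .xp) ∨
  (u = wd gxx ∧ v = wd .x * wd .xp) ∨
  (∃ g ∈ Gp, u = wd .one * wd g ∧ v = wd g) ∨
  (∃ g ∈ Gp, u = wd g * wd .one ∧ v = wd g) ∨
  (∃ g ∈ Gp, u = wd g * wd g ∧ v = wd g) ∨
  (∃ g ∈ G5, 2 ≤ ht g ∧ u = wd g.ctr * gLw g * wd g ∧ v = wd g) ∨
  (∃ g ∈ G5, 2 ≤ ht g ∧ u = wd g * gRw g * wd g.ctr ∧ v = wd g) ∨
  (∃ g ∈ G5, 2 ≤ ht g ∧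
    u = wd g.rgt * wd g.rgta * wd g * wd (ainv g.lfta) * wd g.lft ∧
    v = wd g.rgt * wd g.rgta * wd g.ctr * wd (ainv g.lfta) * wd g.lft)

/-- The congruence `ρ`: the smallest congruence on `G⁺` containing `ρ_e ∪ ρ_s`. -/
def rho : Con W := conGen rhoBase

/-- The quotient `F¹ = G⁺/ρ`. -/
abbrev F1 := rho.Quotient

/-- The `ρ`-class `[u]`. -/
def cls (u : W) : F1 := (u : F1)

/-- The word of a nonempty list of letters (junk on `[]`). -/
def wordOf : List Letter → W
  | [] => wd .one
  | a :: t => t.foldl (fun w b => w * wd b) (wd a)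

/-! ### Landscapes -/

/-- A landscape datum: the first letter `g₀` together with the list of pairs
`(a₁,g₁), …, (aₙ,gₙ)`, encoding the alternating word `g₀a₁g₁⋯aₙgₙ`. -/
abbrev LS := Letter × List (Letter × Letter)

/-- The last letter `τ(u)`. -/
def lastL (u : LS) : Letter := u.2.foldl (fun _ p => p.2) u.1

/-- The letters `g₀, g₁, …, gₙ` of a landscape datum. -/
def letters (u : LS) : List Letter := u.1 :: u.2.map Prod.snd

/-- The underlying word as a list of letters, `g₀ a₁ g₁ ⋯ aₙ gₙ`. -/
def flat (u : LS) : List Letter := u.1 :: u.2.foldr (fun p r => p.1 :: p.2 :: r) []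

/-- The underlying word in `G⁺`. -/
def toW (u : LS) : W := u.2.foldl (fun w p => w * wd p.1 * wd p.2) (wd u.1)

/-- `u₁ * u₂`: concatenation of landscapes merging the doubled letter `τ(u₁) = σ(u₂)`. -/
def star (u v : LS) : LS := (u.1, u.2 ++ v.2)

/-- The triplet `g₁ a g` is left anchored. -/
def LeftAnchored (g1 a g : Letter) : Prop :=
  g ∈ G5 ∧ ((g1 = g.lft ∧ a = g.lfta) ∨ (g1 = g.rgt ∧ a = g.rgta))

/-- The triplet `g a g₁` is right anchored. -/
def RightAnchored (g a g1 : Letter) : Prop :=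
  g ∈ G5 ∧ ((g1 = g.lft ∧ a = ainv g.lfta) ∨ (g1 = g.rgt ∧ a = ainv g.rgta))

/-- The triplet `g₁ a g₂` is anchored. -/
def Anchored (g1 a g2 : Letter) : Prop :=
  LeftAnchored g1 a g2 ∨ RightAnchored g1 a g2

/-- All consecutive triplets are anchored. -/
def Chain : Letter → List (Letter × Letter) → Prop
  | _, [] => True
  | g, (a, g') :: t => Anchored g a g' ∧ Chain g' t

/-- `u` is a landscape. -/
def IsLandscape (u : LS) : Prop :=
  u.1 ∈ Gp ∧ (∀ p ∈ u.2, p.1 ∈ AnchorS ∧ p.2 ∈ Gp) ∧ Chain u.1 u.2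

/-- Each step goes up: `g_{j-1} ∈ {gⱼ^l, gⱼ^r}`. -/
def UpChain : Letter → List (Letter × Letter) → Prop
  | _, [] => True
  | g, (_, g') :: t => (g = g'.lft ∨ g = g'.rgt) ∧ UpChain g' t

/-- Each step goes down: `gⱼ ∈ {g_{j-1}^l, g_{j-1}^r}`. -/
def DownChain : Letter → List (Letter × Letter) → Prop
  | _, [] => True
  | g, (_, g') :: t => (g' = g.lft ∨ g' = g.rgt) ∧ DownChain g' t

/-- `u` is an uphill. -/
def IsUphill (u : LS) : Prop := IsLandscape u ∧ u.2 ≠ [] ∧ UpChain u.1 u.2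

/-- `u` is a downhill. -/
def IsDownhill (u : LS) : Prop := IsLandscape u ∧ u.2 ≠ [] ∧ DownChain u.1 u.2

/-- The letter `gⱼ` is a river of `u` (an interior letter with both neighbours one higher). -/
def IsRiverAt (u : LS) (j : ℕ) : Prop :=
  0 < j ∧ j + 1 < (letters u).length ∧
  ht ((letters u).getD (j-1) .one) = ht ((letters u).getD j .one) + 1 ∧
  ht ((letters u).getD (j+1) .one) = ht ((letters u).getD j .one) + 1

/-- `u` has no rivers. -/
def NoRivers (u : LS) : Prop := ∀ j, ¬ IsRiverAt u j

/-- `u` is a mountain range: a landscape with `σ(u) = τ(u) = 1`. -/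
def IsMountainRange (u : LS) : Prop :=
  IsLandscape u ∧ u.1 = Letter.one ∧ lastL u = Letter.one

/-- `u` is a mountain: a mountain range with no rivers. -/
def IsMountain (u : LS) : Prop := IsMountainRange u ∧ NoRivers u

/-- Uplifting of a river: `u → v`. -/
def Uplift (u v : LS) : Prop :=
  v.1 = u.1 ∧ ∃ t1 a gr b gn t2,
    u.2 = t1 ++ (a, gr) :: (b, gn) :: t2 ∧
    ht (lastL (u.1, t1)) = ht gr + 1 ∧ ht gn = ht gr + 1 ∧
    ((lastL (u.1, t1) = gn ∧ a = ainv b ∧ v.2 = t1 ++ t2) ∨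
     (¬(lastL (u.1, t1) = gn ∧ a = ainv b) ∧
       v.2 = t1 ++ (a, Letter.tup gn (ainv b) gr a (lastL (u.1, t1))) :: (b, gn) :: t2))

/-- `→*`: iterated uplifting of rivers. -/
def UpliftStar : LS → LS → Prop := Relation.ReflTransGen Uplift

/-! ### The maps β₁ and related functions -/

/-- `g^{cⁿ}`: the base of the tower of centers (the first entry of `β₁(g)`'s hills). -/
def cbase : Letter → Letter
  | .tup l la c ra r => if ht l = 0 then Letter.tup l la c ra r else cbase c
  | g => g

/-- The pair list of the uphill `β_{1,l}(g)` (starting letter `cbase g`). -/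
def lPairs : Letter → List (Letter × Letter)
  | .tup l la c ra r =>
      if ht l = 0 then []
      else lPairs c ++ [(ainv la, l), (la, Letter.tup l la c ra r)]
  | _ => []

/-- The pair list of the downhill `β_{1,r}(g)` (starting letter `g`). -/
def rPairs : Letter → List (Letter × Letter)
  | .tup l _ c ra r =>
      if ht l = 0 then []
      else (ainv ra, r) :: (ra, c) :: rPairs c
  | _ => []

/-- `β₁` on a single letter of `G`. -/
def beta1L : Letter → LS
  | .one => (.one, [])
  | .x => (.one, [(.one, gxx), (.x, .one)])
  | .xp => (.one, [(.xp, gxx), (.one, .one)])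
  | g => if ht g % 2 = 0 then (cbase g, lPairs g ++ rPairs g)
         else (.one, (.one, cbase g) :: (lPairs g ++ rPairs g ++ [(.one, .one)]))

/-- `β₁` on a word (given as a list of letters): the `*`-product of the `β₁` of its letters. -/
def beta1W (l : List Letter) : LS := (.one, (l.map (fun h => (beta1L h).2)).flatten)

/-! ### Hills of mountains, peaks, reverses -/

/-- Pair list of the maximal uphill prefix. -/
def lamLPairs : Letter → List (Letter × Letter) → List (Letter × Letter)
  | _, [] => []
  | g, (a, g') :: t => if ht g < ht g' then (a, g') :: lamLPairs g' t else []

/-- The left hill `λ_l(u)` of a mountain. -/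
def lamL (u : LS) : LS := (u.1, lamLPairs u.1 u.2)

/-- The peak `κ(u)` of a mountain. -/
def peak (u : LS) : Letter := lastL (lamL u)

/-- The right hill `λ_r(u)` of a mountain. -/
def lamR (u : LS) : LS := (peak u, u.2.drop (lamLPairs u.1 u.2).length)

/-- Pair list of the reverse of a landscape. -/
def revPairs : Letter → List (Letter × Letter) → List (Letter × Letter)
  | _, [] => []
  | g, (a, g') :: t => revPairs g' t ++ [(ainv a, g)]

/-- The reverse `ū` of a landscape `u`. -/
def rev (u : LS) : LS := (lastL u, revPairs u.1 u.2)

/-! ### Green's relations on `F¹` -/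

/-- `s ≤_R t` : `s F¹ ⊆ t F¹`. -/
def leR (s t : F1) : Prop := ∀ y : F1, (∃ m, y = s * m) → ∃ m, y = t * m

/-- `s ≤_L t` : `F¹ s ⊆ F¹ t`. -/
def leL (s t : F1) : Prop := ∀ y : F1, (∃ m, y = m * s) → ∃ m, y = m * t

/-- `s ≤_J t` : `F¹ s F¹ ⊆ F¹ t F¹`. -/
def leJ (s t : F1) : Prop := ∀ y : F1, (∃ p q, y = p * s * q) → ∃ p q, y = p * t * q

/-- Green's relation `R`. -/
def Rrel (s t : F1) : Prop := leR s t ∧ leR t s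

/-- Green's relation `L`. -/
def Lrel (s t : F1) : Prop := leL s t ∧ leL t s

/-- Green's relation `J`. -/
def Jrel (s t : F1) : Prop := leJ s t ∧ leJ t s

/-- Green's relation `H = R ∩ L`. -/
def Hrel (s t : F1) : Prop := Rrel s t ∧ Lrel s t

/-- Green's relation `D = L ∨ R` (the join of the equivalences `L` and `R`). -/
def Drel : F1 → F1 → Prop := Relation.EqvGen (fun s t => Lrel s t ∨ Rrel s t)

/-- The sandwich set `S(e,f)` in `F¹`. -/
def sandw (e f : F1) : Set F1 :=
  {h | h * h = h ∧ f * h = h ∧ h * e = h ∧ e * h * f = e * f}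

/-- The ground `ε(g)`. -/
def ground : Letter → Set Letter
  | .tup l la c ra r => ground l ∪ {Letter.tup l la c ra r} ∪ ground r
  | g => {g}

/-- `F = F¹ \ {[1]}`. -/
def Fset : Set F1 := {s | s ≠ cls (wd .one)}

/-- A valley: a downhill followed by an uphill, merged at the lowest letter. -/
def IsValley (w : LS) : Prop :=
  ∃ d u : LS, IsDownhill d ∧ IsUphill u ∧ lastL d = u.1 ∧ w = star d u

/-- A canyon: a valley with `σ(w) = τ(w)`. -/
def IsCanyon (w : LS) : Prop := IsValley w ∧ w.1 = lastL w

/-- A gorge: a canyon with `w →* σ(w)`. -/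
def IsGorge (w : LS) : Prop := IsCanyon w ∧ UpliftStar w (w.1, [])


lemma lft_Gp : ∀ j g, g ∈ Ge j → g.lft ∈ Gp := by
  intro j g h
  match j with
  | 0 => cases h
  | 1 =>
    simp only [Ge, Set.mem_singleton_iff] at h
    subst h
    exact Or.inr rfl
  | (k+2) =>
    obtain ⟨g', hg', h⟩ := h
    rcases h with h | h <;> subst h <;> exact Or.inl ⟨k+1, Or.inl hg'⟩

lemma ht_GI : ∀ i, ∀ g ∈ GI i, ht g = i := by
  intro i
  induction i using Nat.strong_induction_on with
  | _ i ih =>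
    match i with
    | 0 => rintro g (h | h) <;> cases h
    | 1 =>
      rintro g (h | h)
      · simp only [Ge, Set.mem_singleton_iff] at h
        subst h; rfl
      · cases h
    | (k+2) =>
      rintro g (h | h)
      · obtain ⟨g', hg', h⟩ := h
        have := ih (k+1) (by omega) g' (Or.inl hg')
        rcases h with h | h <;> subst h <;> simp [ht, this]
      · match k, h with
        | 0, h => cases h
        | (m+1), h =>
          obtain ⟨l, la, c, ra, r, rfl, hl, -⟩ := h
          have := ih (m+2) (by omega) l hl
          simp [ht, this]

lemma ctr_Gp : ∀ i g, g ∈ GI i → 2 ≤ i → g.ctr ∈ Gp := by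
  rintro i g h h2
  match i with
  | 0 => omega
  | 1 => omega
  | (k+2) =>
    rcases h with h | h
    · obtain ⟨g', hg', h⟩ := h
      rcases h with h | h <;> subst h <;> exact lft_Gp (k+1) g' hg'
    · match k with
      | 0 => cases h
      | (m+1) =>
        obtain ⟨l, la, c, ra, r, rfl, -, -, hc, -⟩ := h
        exact Or.inl ⟨m+1, hc⟩

/-- Lemma `prodelem (i)`: for `g ∈ G⁵` with `↑(g) ≥ 2`,
`g ≈ g^c g ≈ g g^c ≈ g g^L g ≈ g g^R g`. -/
theorem statement0 (g : Letter) (hg : g ∈ G5) (h2 : 2 ≤ ht g) :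
    rho (wd g) (wd g.ctr * wd g) ∧ rho (wd g) (wd g * wd g.ctr) ∧
    rho (wd g) (wd g * gLw g * wd g) ∧ rho (wd g) (wd g * gRw g * wd g) := by
  have base : ∀ u v : W, rhoBase u v → rho u v := fun u v h => ConGen.Rel.of u v h
  obtain ⟨i, hi⟩ := hg
  have hg : g ∈ G5 := ⟨i, hi⟩
  have hti := ht_GI i g hi
  have hctr : g.ctr ∈ Gp := ctr_Gp i g hi (by omega)
  have idg : rho (wd g * wd g) (wd g) :=
    base _ _ (Or.inr (Or.inr (Or.inr (Or.inr (Or.inr (Or.inl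
      ⟨g, Or.inl hg, rfl, rfl⟩))))))
  have idc : rho (wd g.ctr * wd g.ctr) (wd g.ctr) :=
    base _ _ (Or.inr (Or.inr (Or.inr (Or.inr (Or.inr (Or.inl
      ⟨g.ctr, hctr, rfl, rfl⟩))))))
  have r7 : rho (wd g.ctr * gLw g * wd g) (wd g) :=
    base _ _ (Or.inr (Or.inr (Or.inr (Or.inr (Or.inr (Or.inr (Or.inl
      ⟨g, hg, h2, rfl, rfl⟩)))))))
  have r8 : rho (wd g * gRw g * wd g.ctr) (wd g) :=
    base _ _ (Or.inr (Or.inr (Or.inr (Or.inr (Or.inr (Or.inr (Or.inr (Or.inl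
      ⟨g, hg, h2, rfl, rfl⟩))))))))
  have h1 : rho (wd g.ctr * wd g) (wd g) := by
    have s1 : rho (wd g.ctr * wd g) (wd g.ctr * (wd g.ctr * gLw g * wd g)) :=
      rho.mul (rho.refl _) (rho.symm r7)
    have s2 : rho (wd g.ctr * (wd g.ctr * gLw g * wd g)) (wd g.ctr * (gLw g * wd g)) := by
      have := rho.mul idc (rho.refl (gLw g * wd g))
      simpa [mul_assoc] using this
    have s3 : rho (wd g.ctr * (gLw g * wd g)) (wd g) := by
      simpa [mul_assoc] using r7
    exact (s1.trans s2).trans s3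
  have h1' : rho (wd g * wd g.ctr) (wd g) := by
    have s1 : rho (wd g * wd g.ctr) ((wd g * gRw g * wd g.ctr) * wd g.ctr) :=
      rho.mul (rho.symm r8) (rho.refl _)
    have s2 : rho ((wd g * gRw g * wd g.ctr) * wd g.ctr) (wd g * gRw g * wd g.ctr) := by
      have := rho.mul (rho.refl (wd g * gRw g)) idc
      simpa [mul_assoc] using this
    exact (s1.trans s2).trans r8
  have h3 : rho (wd g * gLw g * wd g) (wd g) := by
    have s1 : rho (wd g * gLw g * wd g) ((wd g * wd g.ctr) * (gLw g * wd g)) := by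
      have := rho.mul (rho.symm h1') (rho.refl (gLw g * wd g))
      simpa [mul_assoc] using this
    have s2 : rho ((wd g * wd g.ctr) * (gLw g * wd g)) (wd g * wd g) := by
      have := rho.mul (rho.refl (wd g)) r7
      simpa [mul_assoc] using this
    exact (s1.trans s2).trans idg
  have h4 : rho (wd g * gRw g * wd g) (wd g) := by
    have s1 : rho (wd g * gRw g * wd g) ((wd g * gRw g * wd g.ctr) * wd g) := by
      have := rho.mul (rho.refl (wd g * gRw g)) (rho.symm h1)
      simpa [mul_assoc] using this
    have s2 : rho ((wd g * gRw g * wd g.ctr) * wd g) (wd g * wd g) :=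
      rho.mul r8 (rho.refl _)
    exact (s1.trans s2).trans idg
  exact ⟨rho.symm h1, rho.symm h1', rho.symm h3, rho.symm h4⟩
end WGO
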